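/- arXiv:1905.08083 — 5 statements merged into one kernel-verified Lean document; each statement's English description precedes it below -/
import Mathlib

section
/- Let F_q be a finite field with q odd, let D ∈ F_q be nonzero, and let A, B, C, E ∈ F_q. Then the integer sum over α ∈ F_q of the Legendre symbol ((Aα² + Bα + C)(Dα + E)² / q) is congruent modulo q to −(A/q) − (AE² − BDE + CD² / q). -/
/-- The Legendre symbol on a finite field: the number of square roots of `a` minus 1. -/
noncomputable def leg (F : Type*) [Field F] (a : F) : ℤ :=
  (Nat.card {x : F // x ^ 2 = a} : ℤ) - 1

open Finset

section Aux

variable {F : Type*} [Field F] [Fintype F] [DecidableEq F]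

lemma leg_eq_quadraticChar (hF : ringChar F ≠ 2) (a : F) :
    leg F a = quadraticChar F a := by
  have h := quadraticChar_card_sqrts hF a
  have hset : ({x : F | x ^ 2 = a}.toFinset) = Finset.univ.filter (fun x => x ^ 2 = a) := by
    ext x; simp
  rw [hset] at h
  unfold leg
  rw [Nat.card_eq_fintype_card, Fintype.card_subtype]
  omega

lemma card_sqrts_eq (hF : ringChar F ≠ 2) (a : F) :
    ((Finset.univ.filter (fun x : F => x ^ 2 = a)).card : ℤ) = quadraticChar F a + 1 := by
  have h := quadraticChar_card_sqrts hF a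
  have hset : ({x : F | x ^ 2 = a}.toFinset) = Finset.univ.filter (fun x => x ^ 2 = a) := by
    ext x; simp
  rwa [hset] at h

lemma sum_quadChar_shift (hF : ringChar F ≠ 2) (c : F) :
    ∑ b : F, quadraticChar F (b + c) = 0 := by
  have h : ∑ b : F, quadraticChar F (b + c) = ∑ y : F, quadraticChar F y :=
    Fintype.sum_equiv (Equiv.addRight c) _ _ (fun b => rfl)
  rw [h, quadraticChar_sum_zero hF]

end Aux

section Aux2

variable {F : Type*} [Field F] [Fintype F] [DecidableEq F]

lemma sum_quadChar_mul_shift (hF : ringChar F ≠ 2) {c : F} (hc : c ≠ 0) :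
    ∑ b : F, quadraticChar F (b * (b + c)) = -1 := by
  have hJ := jacobiSum_nontrivial_inv (R := ℤ) (quadraticChar_ne_one hF)
  rw [(quadraticChar_isQuadratic F).inv, jacobiSum] at hJ
  have hnc : -c ≠ 0 := neg_ne_zero.mpr hc
  have key : ∑ b : F, quadraticChar F (b * (b + c)) =
      ∑ x : F, quadraticChar F (-1) * (quadraticChar F x * quadraticChar F (1 - x)) := by
    refine (Fintype.sum_equiv (Equiv.mulLeft₀ (-c) hnc)
      (fun x => quadraticChar F (-1) * (quadraticChar F x * quadraticChar F (1 - x)))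
      (fun b => quadraticChar F (b * (b + c))) (fun x => ?_)).symm
    have harg : (Equiv.mulLeft₀ (-c) hnc) x * ((Equiv.mulLeft₀ (-c) hnc) x + c)
        = (-1) * (c ^ 2 * (x * (1 - x))) := by
      simp only [Equiv.mulLeft₀_apply]
      ring
    show _ = quadraticChar F ((Equiv.mulLeft₀ (-c) hnc) x * ((Equiv.mulLeft₀ (-c) hnc) x + c))
    rw [harg]
    simp only [map_mul]
    rw [quadraticChar_sq_one' hc]
    ring
  rw [key, ← Finset.mul_sum, hJ]
  have : quadraticChar F (-1) * quadraticChar F (-1) = 1 := by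
    rw [← map_mul]; simp
  rw [mul_neg, this]

lemma sum_quadChar_sq_add (hF : ringChar F ≠ 2) (c : F) :
    (∑ x : F, quadraticChar F (x ^ 2 + c)) ≡ -1 [ZMOD (Fintype.card F)] := by
  by_cases hc : c = 0
  · subst hc
    have hval : ∑ x : F, quadraticChar F (x ^ 2 + 0) = (Fintype.card F : ℤ) - 1 := by
      rw [Finset.sum_eq_sum_sdiff_singleton_add (Finset.mem_univ (0 : F))
        (fun x => quadraticChar F (x ^ 2 + 0))]
      have h0 : quadraticChar F ((0 : F) ^ 2 + 0) = 0 := by simp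
      rw [h0, add_zero]
      have hone : ∀ x ∈ Finset.univ \ {(0 : F)}, quadraticChar F (x ^ 2 + 0) = 1 := by
        intro x hx
        simp only [Finset.mem_sdiff, Finset.mem_singleton] at hx
        rw [add_zero]
        exact quadraticChar_sq_one' hx.2
      rw [Finset.sum_congr rfl hone, Finset.sum_const, Finset.card_sdiff_of_subset (by simp),
        Finset.card_univ, Finset.card_singleton]
      have h1 : 1 ≤ Fintype.card F := Fintype.card_pos
      simp only [nsmul_eq_mul, mul_one]
      push_cast [Nat.cast_sub h1]
      omega
    rw [hval]
    exact Int.ModEq.symm (Int.modEq_iff_dvd.mpr ⟨1, by ring⟩)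
  · -- exact evaluation
    have key : ∑ x : F, quadraticChar F (x ^ 2 + c) = -1 := by
      have hfib := Finset.sum_fiberwise' Finset.univ (fun x : F => x ^ 2)
        (fun b => quadraticChar F (b + c))
      have hinner : ∀ b : F, ∑ _x ∈ Finset.univ.filter (fun x : F => x ^ 2 = b),
          quadraticChar F (b + c)
          = (quadraticChar F b + 1) * quadraticChar F (b + c) := by
        intro b
        rw [Finset.sum_const, nsmul_eq_mul, card_sqrts_eq hF]
      calc ∑ x : F, quadraticChar F (x ^ 2 + c)
          = ∑ b : F, ∑ _x ∈ Finset.univ.filter (fun x : F => x ^ 2 = b),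
              quadraticChar F (b + c) := by rw [hfib]
        _ = ∑ b : F, (quadraticChar F b + 1) * quadraticChar F (b + c) := by
              exact Finset.sum_congr rfl fun b _ => hinner b
        _ = ∑ b : F, (quadraticChar F (b * (b + c)) + quadraticChar F (b + c)) := by
              refine Finset.sum_congr rfl fun b _ => ?_
              rw [map_mul]; ring
        _ = (∑ b : F, quadraticChar F (b * (b + c))) + ∑ b : F, quadraticChar F (b + c) := by
              rw [Finset.sum_add_distrib]
        _ = -1 := by
              rw [sum_quadChar_mul_shift hF hc, sum_quadChar_shift hF]
              ring
    rw [key]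

lemma sum_quadChar_quadratic (hF : ringChar F ≠ 2) (A B C : F) :
    (∑ α : F, quadraticChar F (A * α ^ 2 + B * α + C))
      ≡ -quadraticChar F A [ZMOD (Fintype.card F)] := by
  by_cases hA : A = 0
  · subst hA
    simp only [zero_mul, zero_add, MulChar.map_zero, neg_zero]
    by_cases hB : B = 0
    · subst hB
      simp only [zero_mul, zero_add, Finset.sum_const, Finset.card_univ, nsmul_eq_mul]
      have : ((Fintype.card F : ℤ)) ∣ (Fintype.card F : ℤ) * quadraticChar F C :=
        Dvd.intro _ rfl
      exact (Int.modEq_zero_iff_dvd).mpr this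
    · have : ∑ α : F, quadraticChar F (B * α + C) = ∑ y : F, quadraticChar F y := by
        exact Fintype.sum_equiv ((Equiv.mulLeft₀ B hB).trans (Equiv.addRight C)) _ _
          (fun α => by simp [Equiv.mulLeft₀_apply, Equiv.addRight])
      rw [this, quadraticChar_sum_zero hF]
  · have h2 : (2 : F) ≠ 0 := Ring.two_ne_zero hF
    set d := B / (2 * A) with hd
    set c := C / A - d ^ 2 with hc
    have hcomp : ∀ α : F, A * α ^ 2 + B * α + C = A * ((α + d) ^ 2 + c) := by
      intro α
      rw [hc, hd]
      field_simp
      ring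
    have hsum1 : ∑ α : F, quadraticChar F (A * α ^ 2 + B * α + C)
        = quadraticChar F A * ∑ x : F, quadraticChar F (x ^ 2 + c) := by
      rw [Finset.mul_sum]
      refine Fintype.sum_equiv (Equiv.addRight d) _ _ (fun α => ?_)
      rw [hcomp α, map_mul]
      rfl
    rw [hsum1]
    have := (sum_quadChar_sq_add hF c).mul_left (quadraticChar F A)
    simpa using this

end Aux2

theorem legendre_sum_quadratic_times_square (F : Type*) [Field F] [Fintype F]
    (hodd : Odd (Fintype.card F)) (A B C D E : F) (hD : D ≠ 0) :
    (∑ α : F, leg F ((A * α ^ 2 + B * α + C) * (D * α + E) ^ 2))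
      ≡ -leg F A - leg F (A * E ^ 2 - B * D * E + C * D ^ 2) [ZMOD (Fintype.card F)] := by
  classical
  have hF : ringChar F ≠ 2 := by
    intro h
    have := FiniteField.even_card_iff_char_two.mp h
    rw [Nat.odd_iff] at hodd
    omega
  simp only [leg_eq_quadraticChar hF]
  set χ := quadraticChar F with hχ
  set α₀ : F := -E / D with hα₀
  have hroot : D * α₀ + E = 0 := by
    rw [hα₀]; field_simp; ring
  have hterm : ∀ α : F, χ ((A * α ^ 2 + B * α + C) * (D * α + E) ^ 2)
      = χ (A * α ^ 2 + B * α + C)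
        - (if α = α₀ then χ (A * α₀ ^ 2 + B * α₀ + C) else 0) := by
    intro α
    by_cases h : α = α₀
    · subst h
      rw [if_pos rfl, hroot]
      simpa using χ.map_zero
    · rw [if_neg h, sub_zero]
      have hne : D * α + E ≠ 0 := by
        intro h0
        apply h
        rw [hα₀]
        field_simp
        linear_combination h0
      rw [map_mul, quadraticChar_sq_one' hne, mul_one]
  have hsplit : ∑ α : F, χ ((A * α ^ 2 + B * α + C) * (D * α + E) ^ 2)
      = (∑ α : F, χ (A * α ^ 2 + B * α + C)) - χ (A * α₀ ^ 2 + B * α₀ + C) := by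
    rw [Finset.sum_congr rfl (fun α _ => hterm α), Finset.sum_sub_distrib]
    congr 1
    rw [Finset.sum_ite_eq' Finset.univ α₀ (fun _ => χ (A * α₀ ^ 2 + B * α₀ + C))]
    simp
  have hval : χ (A * E ^ 2 - B * D * E + C * D ^ 2) = χ (A * α₀ ^ 2 + B * α₀ + C) := by
    have harg : A * E ^ 2 - B * D * E + C * D ^ 2 = (A * α₀ ^ 2 + B * α₀ + C) * D ^ 2 := by
      rw [hα₀]
      field_simp
      ring
    rw [harg, map_mul, quadraticChar_sq_one' hD, mul_one]
  rw [hsplit, hval]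
  exact (sum_quadChar_quadratic hF A B C).sub_right _
end

section
/- (Chevalley–Warning for Legendre sums) Let q = p^n with p an odd prime, and let F be a polynomial over F_q in N variables of total degree strictly less than 2N. Then the sum over α ∈ F_q^N of the Legendre symbol (F(α)/q) is congruent to 0 modulo p. -/
theorem chevalley_warning_legendre (K : Type*) [Field K] [Fintype K]
    (p n : ℕ) (hp : p.Prime) (hodd : Odd p) (hcard : Fintype.card K = p ^ n)
    (N : ℕ) (F : MvPolynomial (Fin N) K) (hdeg : F.totalDegree < 2 * N) :
    (∑ α : Fin N → K, leg K (MvPolynomial.eval α F)) ≡ 0 [ZMOD (p : ℤ)] := by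
  classical
  -- basic facts
  have hq1 : 1 < Fintype.card K := Fintype.one_lt_card
  have hn : n ≠ 0 := by
    rintro rfl
    simp [hcard] at hq1
  -- the characteristic of K is p
  obtain ⟨m, hrp, hcard'⟩ := FiniteField.card K (ringChar K)
  have hpr : p = ringChar K := by
    have hdvd : p ∣ ringChar K ^ (m : ℕ) := by
      rw [← hcard', hcard]
      exact dvd_pow_self p hn
    exact (Nat.prime_dvd_prime_iff_eq hp hrp).mp (hp.dvd_of_dvd_pow hdvd)
  have hchar : CharP K p := hpr ▸ ringChar.charP K
  have h2 : ringChar K ≠ 2 := by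
    rw [← hpr]
    intro h
    subst h
    simp [Nat.odd_iff] at hodd
  -- leg agrees with the quadratic character
  have hleg : ∀ a : K, leg K a = quadraticChar K a := by
    intro a
    have h := quadraticChar_card_sqrts h2 a
    have hc : Nat.card {x : K // x ^ 2 = a} = ({x : K | x ^ 2 = a}.toFinset).card := by
      simp [Nat.card_eq_fintype_card, Set.toFinset_card, Fintype.card_subtype]
    rw [leg, hc]
    omega
  -- cast the sum into K
  have hcast : ((∑ α : Fin N → K, leg K (MvPolynomial.eval α F) : ℤ) : K) = 0 := by
    push_cast
    have : ∀ α : Fin N → K, ((leg K (MvPolynomial.eval α F) : ℤ) : K)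
        = MvPolynomial.eval α (F ^ (Fintype.card K / 2)) := by
      intro α
      rw [hleg, quadraticChar_eq_pow_of_char_ne_two' h2, map_pow]
    rw [Finset.sum_congr rfl fun α _ => this α]
    apply MvPolynomial.sum_eval_eq_zero
    -- degree bound
    have hN : N ≠ 0 := by
      rintro rfl
      simp at hdeg
    have hdb : (F ^ (Fintype.card K / 2)).totalDegree
        ≤ Fintype.card K / 2 * F.totalDegree := MvPolynomial.totalDegree_pow F _
    have hodd' : Odd (Fintype.card K) := by
      rw [hcard]; exact hodd.pow
    obtain ⟨k, hk2⟩ := hodd'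
    have h2q : Fintype.card K / 2 * 2 = Fintype.card K - 1 := by
      omega
    have hk : 1 ≤ Fintype.card K / 2 := by omega
    rw [Fintype.card_fin]
    calc (F ^ (Fintype.card K / 2)).totalDegree
        ≤ Fintype.card K / 2 * F.totalDegree := hdb
      _ < Fintype.card K / 2 * (2 * N) :=
          mul_lt_mul_of_pos_left hdeg (by omega : 0 < Fintype.card K / 2)
      _ = (Fintype.card K - 1) * N := by rw [← mul_assoc, h2q]
  -- conclude modulo p
  have : (p : ℤ) ∣ ∑ α : Fin N → K, leg K (MvPolynomial.eval α F) :=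
    (CharP.intCast_eq_zero_iff K p _).mp hcast
  simpa [Int.ModEq] using (Int.modEq_zero_iff_dvd).mpr this
end

section
/- (Chevalley–Warning coefficient form) Let q = p^n with p an odd prime and let F be a polynomial over F_q in N variables of total degree at most 2N. Then (−1)^N times the sum over α ∈ F_q^N of the Legendre symbol (F(α)/q) is congruent modulo p to the coefficient of the monomial (α_1 ⋯ α_N)^{q−1} in F^{(q−1)/2}. -/
open MvPolynomial Finset

theorem FiniteField.sum_pow_card_sub_one {K : Type*} [Field K] [Fintype K] :
    ∑ x : K, x ^ (Fintype.card K - 1) = -1 := by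
  classical
  have hterm : ∀ x : K, x ^ (Fintype.card K - 1) = if x ≠ 0 then 1 else 0 := by
    intro x
    split_ifs with hx
    · exact pow_card_sub_one_eq_one x hx
    · rw [not_not.mp hx, zero_pow (Nat.sub_ne_zero_of_lt Fintype.one_lt_card)]
  rw [Fintype.sum_congr _ _ hterm, sum_boole, filter_ne', card_erase_of_mem (mem_univ 0),
    card_univ, Nat.cast_sub Fintype.card_pos, cast_card_eq_zero, Nat.cast_one, zero_sub]

theorem Finsupp.exists_lt_of_sum_le_of_ne {σ : Type*} [Fintype σ] {c : ℕ} {d : σ →₀ ℕ}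
    (hsum : ∑ i, d i ≤ c * Fintype.card σ) (hne : d ≠ equivFunOnFinite.symm fun _ => c) :
    ∃ i, d i < c := by
  by_contra! hge
  have hconst : ∑ _i : σ, c = c * Fintype.card σ := by simp [mul_comm]
  have heq := (sum_eq_sum_iff_of_le fun i _ => hge i).1
    (le_antisymm (Finset.sum_le_sum fun i _ => hge i) (hsum.trans hconst.ge))
  exact hne (Finsupp.ext fun i => (heq i (mem_univ i)).symm)

theorem MvPolynomial.sum_eval_eq_neg_one_pow_mul_coeff {K σ : Type*} [Field K] [Fintype K]
    [Fintype σ] [DecidableEq σ] (f : MvPolynomial σ K)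
    (h : f.totalDegree ≤ (Fintype.card K - 1) * Fintype.card σ) :
    ∑ x : σ → K, eval x f =
      (-1) ^ Fintype.card σ *
        coeff (Finsupp.equivFunOnFinite.symm fun _ => Fintype.card K - 1) f := by
  set w : σ →₀ ℕ := Finsupp.equivFunOnFinite.symm fun _ => Fintype.card K - 1
  have hvanish : ∀ d ∈ f.support, d ≠ w → ∏ i, ∑ a : K, a ^ d i = 0 := by
    intro d hd hne
    have hsum : ∑ i, d i ≤ (Fintype.card K - 1) * Fintype.card σ :=
      (Finsupp.sum_fintype d (fun _ e => e) fun _ => rfl) ▸ (le_totalDegree hd).trans h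
    obtain ⟨i, hi⟩ := Finsupp.exists_lt_of_sum_le_of_ne hsum hne
    exact prod_eq_zero (mem_univ i) (FiniteField.sum_pow_lt_card_sub_one K _ hi)
  calc ∑ x : σ → K, eval x f
      = ∑ d ∈ f.support, ∑ x : σ → K, f.coeff d * ∏ i, x i ^ d i := by
        simp only [eval_eq']
        exact sum_comm
    _ = ∑ d ∈ f.support, f.coeff d * ∏ i, ∑ a : K, a ^ d i := by
        simp only [← mul_sum, Fintype.prod_sum]
    _ = f.coeff w * ∏ i, ∑ a : K, a ^ w i :=
        sum_eq_single w (fun d hd hne => by rw [hvanish d hd hne, mul_zero])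
          fun hw => by rw [notMem_support_iff.mp hw, zero_mul]
    _ = (-1) ^ Fintype.card σ * f.coeff w := by
        simp [w, FiniteField.sum_pow_card_sub_one, mul_comm]

theorem leg_eq_quadraticChar_s9 {K : Type*} [Field K] [Fintype K] [DecidableEq K]
    (hK : ringChar K ≠ 2) (a : K) : leg K a = quadraticChar K a := by
  rw [leg, show Nat.card {x : K // x ^ 2 = a} = _ from
    Nat.card_eq_card_toFinset {x : K | x ^ 2 = a}, quadraticChar_card_sqrts hK a,
    add_sub_cancel_right]

theorem leg_cast_eq_pow {K : Type*} [Field K] [Fintype K] (hK : ringChar K ≠ 2) (a : K) :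
    (leg K a : K) = a ^ (Fintype.card K / 2) := by
  classical
  rw [leg_eq_quadraticChar_s9 hK, quadraticChar_eq_pow_of_char_ne_two' hK]

theorem chevalley_warning_coefficient_form_general (K : Type*) [Field K] [Fintype K]
    (p n : ℕ) (hodd : Odd p) (hcard : Fintype.card K = p ^ n)
    (N : ℕ) (F : MvPolynomial (Fin N) K) (hdeg : F.totalDegree ≤ 2 * N) :
    (((-1 : ℤ) ^ N * ∑ α : Fin N → K, leg K (MvPolynomial.eval α F) : ℤ) : K) =
      MvPolynomial.coeff
        (Finsupp.equivFunOnFinite.symm fun _ : Fin N => Fintype.card K - 1)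
        (F ^ ((Fintype.card K - 1) / 2)) := by
  set q := Fintype.card K with hq
  obtain ⟨m, hm⟩ : Odd q := hcard ▸ hodd.pow
  have hchar : ringChar K ≠ 2 := fun h => by
    have := FiniteField.even_card_of_char_two h
    omega
  have hdeg' : (F ^ m).totalDegree ≤ (q - 1) * Fintype.card (Fin N) :=
    calc (F ^ m).totalDegree ≤ m * (2 * N) := (totalDegree_pow F m).trans (by gcongr)
      _ = (q - 1) * Fintype.card (Fin N) := by
        rw [Fintype.card_fin, hm, Nat.add_sub_cancel]
        ring
  have hleg : ∀ α : Fin N → K, (leg K (eval α F) : K) = eval α (F ^ m) := fun α => by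
    rw [leg_cast_eq_pow hchar, map_pow, show q / 2 = m by omega]
  rw [show (q - 1) / 2 = m by omega]
  push_cast
  simp only [hleg, sum_eval_eq_neg_one_pow_mul_coeff _ hdeg', Fintype.card_fin, ← mul_assoc,
    ← mul_pow, neg_one_mul, neg_neg, one_pow, one_mul, ← hq]

theorem chevalley_warning_coefficient_form (K : Type*) [Field K] [Fintype K]
    (p n : ℕ) (hp : p.Prime) (hodd : Odd p) (hcard : Fintype.card K = p ^ n)
    (N : ℕ) (F : MvPolynomial (Fin N) K) (hdeg : F.totalDegree ≤ 2 * N) :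
    (((-1 : ℤ) ^ N * ∑ α : Fin N → K, leg K (MvPolynomial.eval α F) : ℤ) : K) =
      MvPolynomial.coeff
        (Finsupp.equivFunOnFinite.symm fun _ : Fin N => Fintype.card K - 1)
        (F ^ ((Fintype.card K - 1) / 2)) :=
  chevalley_warning_coefficient_form_general K p n hodd hcard N F hdeg
end

section
/- (Dodgson determinant identity) Let M be an n×n matrix over a commutative ring and let i ≠ j be indices. Write M^{I,J} for the matrix M with rows in I and columns in J deleted. Then det M^{i,i} · det M^{j,j} − det M^{i,j} · det M^{j,i} = det M · det M^{ij,ij}. -/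
/-!
Dodgson's identity is the case of two deleted indices of Jacobi's complementary minor theorem:
the minor of `adj M` on rows and columns `K` equals `det M ^ (#K - 1)` times the minor of `M` on
the complement of `K`. Ordering the indices as `K ⊕ Kᶜ`, let `N` agree with `adj M` in the columns
of `K` and with the identity elsewhere. Then `det N` is the `K`-minor of `adj M`, while
`M * N = [[det M • 1, *], [0, M₂₂]]`, so `det M * det (adj M)₁₁ = det M ^ #K * det M₂₂`.
Cancelling `det M` is legitimate for the generic matrix over `ℤ[X_ab]`, a domain, and the identity
then specializes to every commutative ring.
-/

namespace Matrix

theorem toBlocks₁₁_submatrix_sumElim {R m n κ α β γ : Type*} (M : Matrix m n R) (f : κ → m)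
    (g : α → m) (f' : β → n) (g' : γ → n) :
    (M.submatrix (Sum.elim f g) (Sum.elim f' g')).toBlocks₁₁ = M.submatrix f f' :=
  rfl

theorem toBlocks₂₂_submatrix_sumElim {R m n κ α β γ : Type*} (M : Matrix m n R) (f : κ → m)
    (g : α → m) (f' : β → n) (g' : γ → n) :
    (M.submatrix (Sum.elim f g) (Sum.elim f' g')).toBlocks₂₂ = M.submatrix g g' :=
  rfl

variable {R : Type*} [CommRing R] {κ ι : Type*} [Fintype κ] [DecidableEq κ] [Fintype ι]
  [DecidableEq ι]

theorem det_mul_det_toBlocks₁₁_adjugate (M : Matrix (κ ⊕ ι) (κ ⊕ ι) R) :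
    M.det * M.adjugate.toBlocks₁₁.det = M.det ^ Fintype.card κ * M.toBlocks₂₂.det := by
  set N : Matrix (κ ⊕ ι) (κ ⊕ ι) R := fromBlocks M.adjugate.toBlocks₁₁ 0 M.adjugate.toBlocks₂₁ 1
  have hN_inl : ∀ c b, N c (.inl b) = M.adjugate c (.inl b) := by
    rintro (c | c) b <;> rfl
  have hN_inr : ∀ c b, N c (.inr b) = (1 : Matrix (κ ⊕ ι) (κ ⊕ ι) R) c (.inr b) := by
    rintro (c | c) b <;> simp [N, one_apply]
  have hMN : M * N = fromBlocks (M.det • 1) M.toBlocks₁₂ 0 M.toBlocks₂₂ := by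
    ext a (b | b)
    · calc (M * N) a (.inl b) = (M * M.adjugate) a (.inl b) := by
            simp only [mul_apply, hN_inl]
        _ = _ := by rw [mul_adjugate]; rcases a with a | a <;> simp [one_apply]
    · calc (M * N) a (.inr b) = (M * (1 : Matrix (κ ⊕ ι) (κ ⊕ ι) R)) a (.inr b) := by
            simp only [mul_apply, hN_inr]
        _ = _ := by rw [Matrix.mul_one]; rcases a with a | a <;> rfl
  have hdet := congrArg det hMN
  rwa [det_mul, det_fromBlocks_zero₁₂, det_fromBlocks_zero₂₁, det_one, mul_one, det_smul, det_one,
    mul_one] at hdet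

theorem det_toBlocks₁₁_adjugate [Nonempty κ] (M : Matrix (κ ⊕ ι) (κ ⊕ ι) R) :
    M.adjugate.toBlocks₁₁.det = M.det ^ (Fintype.card κ - 1) * M.toBlocks₂₂.det := by
  let X := mvPolynomialX (κ ⊕ ι) (κ ⊕ ι) ℤ
  have hX : X.adjugate.toBlocks₁₁.det = X.det ^ (Fintype.card κ - 1) * X.toBlocks₂₂.det := by
    refine mul_left_cancel₀ (det_mvPolynomialX_ne_zero (κ ⊕ ι) ℤ) ?_
    rw [det_mul_det_toBlocks₁₁_adjugate, ← mul_assoc, ← pow_succ',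
      Nat.sub_add_cancel Fintype.card_pos]
  let f := MvPolynomial.aeval (R := ℤ) fun p : (κ ⊕ ι) × (κ ⊕ ι) => M p.1 p.2
  have hmap₁₁ : ∀ Y : Matrix (κ ⊕ ι) (κ ⊕ ι) _,
      f.mapMatrix Y.toBlocks₁₁ = (f.mapMatrix Y).toBlocks₁₁ := fun _ => rfl
  have hmap₂₂ : ∀ Y : Matrix (κ ⊕ ι) (κ ⊕ ι) _,
      f.mapMatrix Y.toBlocks₂₂ = (f.mapMatrix Y).toBlocks₂₂ := fun _ => rfl
  simpa only [map_mul, map_pow, AlgHom.map_det, hmap₁₁, hmap₂₂, AlgHom.map_adjugate, X, f,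
    mvPolynomialX_mapMatrix_aeval] using congrArg f hX

end Matrix

namespace Fin

theorem bijective_sumElim_succAbove_succAbove {n : ℕ} {i j : Fin (n + 2)} (hij : i ≠ j)
    {j' : Fin (n + 1)} (hj' : i.succAbove j' = j) :
    Function.Bijective (Sum.elim ![i, j] (i.succAbove ∘ j'.succAbove)) := by
  refine (Fintype.bijective_iff_injective_and_card _).mpr ⟨?_, by simp [add_comm]⟩
  refine Function.Injective.sumElim ?_ (succAbove_right_injective.comp succAbove_right_injective) ?_
  · exact cons_injective_iff.mpr ⟨by simpa using hij, Function.injective_of_subsingleton _⟩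
  · intro a k
    fin_cases a
    · exact (succAbove_ne i _).symm
    · simp [← hj', (succAbove_ne j' k).symm]

end Fin

open Matrix

theorem dodgson_identity {R : Type*} [CommRing R] {n : ℕ}
    (M : Matrix (Fin (n + 2)) (Fin (n + 2)) R) (i j : Fin (n + 2)) (hij : i ≠ j)
    (j' : Fin (n + 1)) (hj' : i.succAbove j' = j) :
    (M.submatrix i.succAbove i.succAbove).det * (M.submatrix j.succAbove j.succAbove).det
      - (M.submatrix i.succAbove j.succAbove).det * (M.submatrix j.succAbove i.succAbove).det
      = M.det * ((M.submatrix i.succAbove i.succAbove).submatrix j'.succAbove j'.succAbove).det := by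
  let e := Equiv.ofBijective _ (Fin.bijective_sumElim_succAbove_succAbove hij hj')
  have jacobi := det_toBlocks₁₁_adjugate (M.submatrix e e)
  rw [adjugate_submatrix_equiv_self, det_submatrix_equiv_self, Equiv.coe_ofBijective,
    toBlocks₁₁_submatrix_sumElim, toBlocks₂₂_submatrix_sumElim, det_fin_two] at jacobi
  simp only [submatrix_apply, cons_val_zero, cons_val_one, cons_val_fin_one, Fintype.card_fin,
    adjugate_fin_succ_eq_det_submatrix, Even.add_self, Even.neg_one_pow, one_mul] at jacobi
  have hsign : (-1 : R) ^ (j + i : ℕ) * (-1) ^ (i + j : ℕ) = 1 := by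
    rw [add_comm, ← pow_add, Even.neg_one_pow ⟨_, rfl⟩]
  rw [submatrix_submatrix]
  linear_combination jacobi + (M.submatrix i.succAbove j.succAbove).det
    * (M.submatrix j.succAbove i.succAbove).det * hsign
end

section
/- Let F ∈ ℤ[α_1, …, α_N] be homogeneous of degree 2N and q an odd prime power. Then (F)_q ≡ −(F|_{α_1=1})_q − (F|_{α_1=0, α_2=1})_q + (F|_{α_1=0, α_2=0})_q mod q, where (G)_q denotes the Legendre sum of G over points of the corresponding affine space over F_q. -/
open MvPolynomial

/-- The Legendre sum of an integer polynomial over all points of affine space over `K`. -/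
noncomputable def legSum (K : Type*) [Field K] [Fintype K] {m : ℕ}
    (G : MvPolynomial (Fin m) ℤ) : ℤ :=
  ∑ α : Fin m → K, leg K (MvPolynomial.aeval α G)

/-!
A homogeneous `F` of even degree `2N` satisfies `F(t • α) = (t ^ N) ^ 2 * F(α)`, so the summand
`leg (F α)` is invariant under scaling by `t ≠ 0`. Splitting `K^N` by the first coordinate, all
slices with a nonzero first coordinate then contribute as much as the slice `α₁ = 1`, whence
`(F)_q = (q - 1) (F|α₁=1)_q + Σ_{α₁ = 0}`. The slice `α₁ = 0` is again scaling invariant and splits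
the same way along `α₂`; reducing `q - 1 ≡ -1` modulo `q` gives the congruence.
-/

theorem MvPolynomial.IsHomogeneous.aeval_smul {σ R S : Type*} [CommSemiring R] [CommSemiring S]
    [Algebra R S] {φ : MvPolynomial σ R} {n : ℕ} (hφ : φ.IsHomogeneous n) (c : S) (x : σ → S) :
    MvPolynomial.aeval (c • x) φ = c ^ n * MvPolynomial.aeval x φ := by
  conv_lhs => rw [← φ.support_sum_monomial_coeff]
  conv_rhs => rw [← φ.support_sum_monomial_coeff]
  simp only [map_sum, aeval_monomial, Finset.mul_sum]
  refine Finset.sum_congr rfl fun d hd => ?_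
  rw [← hφ (mem_support_iff.mp hd)]
  simp only [Pi.smul_apply, smul_eq_mul, mul_pow, Finsupp.weight_apply,
    Pi.one_apply, mul_one, Finsupp.prod, Finsupp.sum, Finset.prod_mul_distrib,
    Finset.prod_pow_eq_pow_sum]
  ring

theorem MvPolynomial.aeval_comp_cases {σ R S : Type*} [CommSemiring R] [CommSemiring S]
    [Algebra R S] {m : ℕ} (p : MvPolynomial σ R) (g : Fin m → MvPolynomial σ R) (x : σ → S) :
    (fun i => aeval x (Fin.cases p g i : MvPolynomial σ R)) =
      Fin.cons (aeval x p) (fun i => aeval x (g i)) :=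
  Fin.comp_cons _ _ _

theorem Fin.smul_cons {M α : Type*} [SMul M α] {m : ℕ} (c : M) (a : α) (y : Fin m → α) :
    c • (Fin.cons a y : Fin (m + 1) → α) = Fin.cons (c • a) (c • y) :=
  Matrix.smul_cons c a y

section LegendreSum

variable {K : Type*} [Field K]

theorem leg_sq_mul {u : K} (hu : u ≠ 0) (a : K) : leg K (u ^ 2 * a) = leg K a := by
  unfold leg
  congr 2
  refine Nat.card_congr ⟨fun x => ⟨u⁻¹ * x.1, ?_⟩, fun x => ⟨u * x.1, ?_⟩, ?_, ?_⟩
  · field_simp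
    exact x.2
  · rw [mul_pow, x.2]
  · intro x; ext; field_simp
  · intro x; ext; field_simp

theorem leg_aeval_smul {σ : Type*} {F : MvPolynomial σ ℤ} {n : ℕ} (hF : F.IsHomogeneous (2 * n))
    {t : K} (ht : t ≠ 0) (x : σ → K) : leg K (aeval (t • x) F) = leg K (aeval x F) := by
  rw [hF.aeval_smul, pow_mul', leg_sq_mul (pow_ne_zero _ ht)]

variable [Fintype K]

theorem legSum_aeval {m k : ℕ} (g : Fin m → MvPolynomial (Fin k) ℤ) (F : MvPolynomial (Fin m) ℤ) :
    legSum K (aeval g F) = ∑ x : Fin k → K, leg K (aeval (fun i => aeval x (g i)) F) := by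
  simp only [legSum, comp_aeval_apply]

theorem Fintype.sum_fin_succ_of_smul_invariant {M : Type*} [AddCommMonoid M] {m : ℕ}
    (f : (Fin (m + 1) → K) → M) (hf : ∀ t : K, t ≠ 0 → ∀ x, f (t • x) = f x) :
    ∑ x, f x = (Fintype.card K - 1) • ∑ y : Fin m → K, f (Fin.cons 1 y)
      + ∑ y : Fin m → K, f (Fin.cons 0 y) := by
  classical
  rw [← Fintype.sum_equiv (Fin.consEquiv fun _ => K) (fun p => f (Fin.cons p.1 p.2)) _
      fun _ => rfl, Fintype.sum_prod_type, ← Finset.sum_erase_add _ _ (Finset.mem_univ 0)]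
  have hslice : ∀ t ∈ Finset.univ.erase (0 : K),
      ∑ y : Fin m → K, f (Fin.cons t y) = ∑ y : Fin m → K, f (Fin.cons 1 y) := by
    intro t ht
    have ht0 : t ≠ 0 := Finset.ne_of_mem_erase ht
    refine (Fintype.sum_equiv (MulAction.toPerm (Units.mk0 t ht0)) _ _ fun y => ?_).symm
    simpa [Units.smul_def, Fin.smul_cons] using (hf t ht0 (Fin.cons 1 y)).symm
  rw [Finset.sum_congr rfl hslice, Finset.sum_const, Finset.card_erase_of_mem (Finset.mem_univ _),
    Finset.card_univ]

end LegendreSum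

theorem affine_reduction_general (K : Type*) [Field K] [Fintype K]
    (n : ℕ)
    (F : MvPolynomial (Fin (n + 2)) ℤ) (hhom : F.IsHomogeneous (2 * (n + 2))) :
    legSum K F ≡
      -legSum K (aeval (Fin.cases (1 : MvPolynomial (Fin (n + 1)) ℤ) (fun k => X k)) F)
      - legSum K (aeval (Fin.cases (0 : MvPolynomial (Fin n) ℤ)
          (Fin.cases (1 : MvPolynomial (Fin n) ℤ) (fun k => X k))) F)
      + legSum K (aeval (Fin.cases (0 : MvPolynomial (Fin n) ℤ)
          (Fin.cases (0 : MvPolynomial (Fin n) ℤ) (fun k => X k))) F)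
      [ZMOD (Fintype.card K : ℤ)] := by
  have hinv : ∀ t : K, t ≠ 0 → ∀ x, leg K (aeval (t • x) F) = leg K (aeval x F) :=
    fun _ ht => leg_aeval_smul hhom ht
  have hinv₀ : ∀ t : K, t ≠ 0 → ∀ y : Fin (n + 1) → K,
      leg K (aeval (Fin.cons 0 (t • y) : Fin (n + 2) → K) F) =
        leg K (aeval (Fin.cons 0 y : Fin (n + 2) → K) F) := fun t ht y => by
    rw [← hinv t ht (Fin.cons 0 y), Fin.smul_cons, smul_zero]
  have hsplit := Fintype.sum_fin_succ_of_smul_invariant (fun x => leg K (aeval x F)) hinv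
  rw [Fintype.sum_fin_succ_of_smul_invariant
    (fun y => leg K (aeval (Fin.cons 0 y : Fin (n + 2) → K) F)) hinv₀] at hsplit
  simp only [legSum_aeval, aeval_comp_cases, map_one, map_zero, aeval_X]
  rw [legSum, hsplit, Int.modEq_iff_dvd]
  set A := ∑ y : Fin (n + 1) → K, leg K (aeval (Fin.cons 1 y) F)
  set B := ∑ z : Fin n → K, leg K (aeval (Fin.cons 0 (Fin.cons 1 z) : Fin (n + 2) → K) F)
  refine ⟨-(A + B), ?_⟩
  simp only [nsmul_eq_mul, Nat.cast_sub Fintype.card_pos]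
  ring

theorem affine_reduction (K : Type*) [Field K] [Fintype K]
    (hodd : Odd (Fintype.card K)) (n : ℕ)
    (F : MvPolynomial (Fin (n + 2)) ℤ) (hhom : F.IsHomogeneous (2 * (n + 2))) :
    legSum K F ≡
      -legSum K (aeval (Fin.cases (1 : MvPolynomial (Fin (n + 1)) ℤ) (fun k => X k)) F)
      - legSum K (aeval (Fin.cases (0 : MvPolynomial (Fin n) ℤ)
          (Fin.cases (1 : MvPolynomial (Fin n) ℤ) (fun k => X k))) F)
      + legSum K (aeval (Fin.cases (0 : MvPolynomial (Fin n) ℤ)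
          (Fin.cases (0 : MvPolynomial (Fin n) ℤ) (fun k => X k))) F)
      [ZMOD (Fintype.card K : ℤ)] :=
  affine_reduction_general K n F hhom
end
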